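/- Let X, Y, Z be finite nonempty types with |X|·|Y| ≥ 2, Q a finite nonempty type, μ a probability mass function on X × Y, and let α : Q × X → ℝ≥0, β : Q × Y → ℝ≥0 be such that p(q|x,y) := α(q,x)·β(q,y) satisfies Σ_q p(q|x,y) = 1 for all (x,y). With σ_{q,t}, τ_{q,t}, the output map q ↦ z_q, T_q, ω_{q,t}, p(q), I, δ ∈ (0,1], Δ = (I+1)/δ, θ_q = p(q)·2^Δ, α̂(q,t), β̂(q,t) defined as follows: for a tile t = (X_t, Y_t, z_t), σ_{q,t} = min_{x∈X_t} α(q,x) − max_{x'∉X_t} α(q,x') and τ_{q,t} = min_{y∈Y_t} β(q,y) − max_{y'∉Y_t} β(q,y') (maxima over empty sets are 0), T_q = { t : σ_{q,t} > 0, τ_{q,t} > 0, z_t = z_q }, ω_{q,t} = σ_{q,t}·τ_{q,t}, p(q) = Σ_{(x,y)} μ(x,y) p(q|x,y), I = Σ_{(q,x,y): μ(x,y)p(q|x,y)>0} μ(x,y) p(q|x,y) log₂( p(q|x,y)/p(q) ), α̂(q,t) = min_{x∈X_t} α(q,x), β̂(q,t) = min_{y∈Y_t} β(q,y) — one has: Σ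 over pairs (q,t) with t ∈ T_q and α̂(q,t)·β̂(q,t) < θ_q of ω_{q,t} ≤ 2^( Δ + log₂ log₂(|X|·|Y|) + 2 ). -/

import Mathlib

/-!
Fix `q`. A tile side `S ⊆ X` with `σ > 0` spans the interval
`(max_{x ∉ S} α q x, min_{x ∈ S} α q x]` of length `σ`, and distinct sides span disjoint intervals,
since an element lying in one side but not the other separates them. So the surviving tiles of `q`
are disjoint rectangles of area `ω` inside `{u v < θ_q}` ∩ `[0, A_q] × [0, B_q]`, where
`A_q = ∑ₓ α q x` and `B_q = ∑_y β q y`, and their total area is at most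
`θ_q (1 + log⁺ (A_q B_q / θ_q))`; this is proved by telescoping against an antiderivative of
`u ↦ min B_q (θ_q / u)`. Now `θ log⁺ (M / θ) ≤ M / N + θ log N`, `∑_q A_q B_q = N = |X| |Y|` and
`∑_q θ_q = 2^Δ ≥ 1` because `I ≥ 0` (Gibbs' inequality), so the total weight is at most
`2^Δ (1 + log N) + 1 ≤ 2^Δ · 4 log₂ N`.
-/

open Finset Real

theorem sum_le_sub_of_separated {ι : Type*} (s : Finset ι) (l r w : ι → ℝ) {G : ℝ → ℝ}
    {a b : ℝ} (hab : a ≤ b) (hG : MonotoneOn G (Set.Icc a b))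
    (hl : ∀ i ∈ s, a ≤ l i) (hlr : ∀ i ∈ s, l i < r i) (hr : ∀ i ∈ s, r i ≤ b)
    (hsep : (s : Set ι).Pairwise fun i j => r i ≤ l j ∨ r j ≤ l i)
    (hw : ∀ i ∈ s, w i ≤ G (r i) - G (l i)) :
    ∑ i ∈ s, w i ≤ G b - G a := by
  classical
  -- peel off the interval with the largest right end: all the others lie to the left of it
  induction s using Finset.induction_on_max_value r generalizing b with
  | empty => simpa using hG ⟨le_rfl, hab⟩ ⟨hab, le_rfl⟩ hab
  | insert i s hi hmax ih =>
    have hmem := mem_insert_self i s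
    have hsub {j} (hj : j ∈ s) : j ∈ insert i s := mem_insert_of_mem hj
    have hli : l i ≤ b := (hlr i hmem).le.trans (hr i hmem)
    have hrest : ∑ j ∈ s, w j ≤ G (l i) - G a := by
      refine ih (hl i hmem) (hG.mono (Set.Icc_subset_Icc le_rfl hli))
        (fun j hj => hl j (hsub hj)) (fun j hj => hlr j (hsub hj)) (fun j hj => ?_)
        (hsep.mono (by simp)) (fun j hj => hw j (hsub hj))
      have hji : j ≠ i := fun h => hi (h ▸ hj)
      refine (hsep (hsub hj) hmem hji).resolve_right fun h => ?_
      linarith [hlr j (hsub hj), hmax j hj]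
    have hGr : G (r i) ≤ G b :=
      hG ⟨(hl i hmem).trans (hlr i hmem).le, hr i hmem⟩ ⟨hab, le_rfl⟩ (hr i hmem)
    rw [sum_insert hi]
    linarith [hw i hmem]

theorem one_sub_div_le_log_div {x y : ℝ} (hx : 0 < x) (hy : 0 < y) : 1 - y / x ≤ log (x / y) := by
  simpa using one_sub_inv_le_log_of_pos (div_pos hx hy)

/-- For `a, B ≥ 0` and `θ > 0`, the area `∫₀ᵃ min B (θ / u) du` of
`{(u, v) ∈ [0, a] × [0, B] | u v ≤ θ}`. -/
noncomputable def hyperbolaArea (θ B a : ℝ) : ℝ :=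
  if a * B ≤ θ then B * a else θ + θ * log (a * B / θ)

section hyperbolaArea

variable {θ B : ℝ}

theorem hyperbolaArea_zero (hθ : 0 ≤ θ) : hyperbolaArea θ B 0 = 0 := by
  simp [hyperbolaArea, hθ]

theorem sub_mul_min_le_hyperbolaArea_sub (hθ : 0 < θ) (hB : 0 ≤ B) {a a' : ℝ} (ha' : 0 ≤ a')
    (h : a' ≤ a) :
    (a - a') * min B (θ / a) ≤ hyperbolaArea θ B a - hyperbolaArea θ B a' := by
  unfold hyperbolaArea
  by_cases ha : a * B ≤ θ
  · rw [if_pos ha, if_pos ((mul_le_mul_of_nonneg_right h hB).trans ha)]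
    nlinarith [min_le_left B (θ / a)]
  have ha0 : 0 < a := by
    by_contra! h0
    exact ha (by nlinarith)
  have hB0 : 0 < B := by
    by_contra! h0
    exact ha (by nlinarith)
  rw [if_neg ha, min_eq_right ((div_le_iff₀' ha0).2 (by linarith))]
  by_cases ha'B : a' * B ≤ θ
  · -- the slack is `(θ - a' B) (1 - θ / (a B)) ≥ 0`
    rw [if_pos ha'B]
    have hlog := one_sub_div_le_log_div (mul_pos ha0 hB0) hθ
    have ht : θ / (a * B) ≤ 1 := (div_le_one (by positivity)).2 (by linarith)
    have hsplit : (a - a') * (θ / a) = θ - a' * B * (θ / (a * B)) := by field_simp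
    rw [hsplit]
    nlinarith [mul_nonneg (sub_nonneg.2 ha'B) (sub_nonneg.2 ht),
      mul_le_mul_of_nonneg_left hlog hθ.le]
  · rw [if_neg ha'B]
    have ha'0 : 0 < a' := by
      by_contra! h0
      exact ha'B (by nlinarith)
    have hdiff : log (a * B / θ) - log (a' * B / θ) = log (a / a') := by
      rw [← log_div (by positivity) (by positivity)]
      congr 1
      field_simp
    rw [add_sub_add_left_eq_sub, ← mul_sub, hdiff,
      show (a - a') * (θ / a) = θ * (1 - a' / a) by field_simp]
    exact mul_le_mul_of_nonneg_left (one_sub_div_le_log_div ha0 ha'0) hθ.le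

theorem monotoneOn_hyperbolaArea (hθ : 0 < θ) (hB : 0 ≤ B) :
    MonotoneOn (hyperbolaArea θ B) (Set.Ici 0) := by
  intro a' ha' a ha h
  have := sub_mul_min_le_hyperbolaArea_sub hθ hB ha' h
  have : 0 ≤ (a - a') * min B (θ / a) :=
    mul_nonneg (sub_nonneg.2 h) (le_min hB (div_nonneg hθ.le (Set.mem_Ici.1 ha)))
  linarith

theorem hyperbolaArea_le (hθ : 0 < θ) (a : ℝ) :
    hyperbolaArea θ B a ≤ θ * (1 + log⁺ (a * B / θ)) := by
  have hpos := mul_nonneg hθ.le (posLog_nonneg (x := a * B / θ))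
  unfold hyperbolaArea
  split_ifs with ha
  · linarith
  · rw [mul_one_add, posLog_apply]
    linarith [mul_le_mul_of_nonneg_left (le_max_right 0 (log (a * B / θ))) hθ.le]

end hyperbolaArea

section tileSides

variable {X : Type*} {f : X → ℝ}

noncomputable def sideMin (f : X → ℝ) (S : Finset X) : ℝ := ⨅ x : S, f x

noncomputable def outsideMax [Fintype X] [DecidableEq X] (f : X → ℝ) (S : Finset X) : ℝ :=
  ⨆ x : (Sᶜ : Finset X), f x

theorem sideMin_le (f : X → ℝ) {S : Finset X} {x : X} (hx : x ∈ S) : sideMin f S ≤ f x :=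
  ciInf_le (Finite.bddBelow_range _) (⟨x, hx⟩ : S)

theorem le_outsideMax [Fintype X] [DecidableEq X] (f : X → ℝ) {S : Finset X} {x : X}
    (hx : x ∉ S) : f x ≤ outsideMax f S :=
  le_ciSup (f := fun x : (Sᶜ : Finset X) => f x) (Finite.bddAbove_range _) ⟨x, mem_compl.2 hx⟩

theorem sideMin_nonneg (hf : ∀ x, 0 ≤ f x) (S : Finset X) : 0 ≤ sideMin f S :=
  Real.iInf_nonneg fun x => hf x

theorem outsideMax_nonneg [Fintype X] [DecidableEq X] (hf : ∀ x, 0 ≤ f x) (S : Finset X) :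
    0 ≤ outsideMax f S :=
  Real.iSup_nonneg fun x => hf x

theorem sideMin_le_of_forall_le {A : ℝ} (hA : 0 ≤ A) (hfA : ∀ x, f x ≤ A) (S : Finset X) :
    sideMin f S ≤ A := by
  rcases S.eq_empty_or_nonempty with rfl | ⟨x, hx⟩
  · simpa [sideMin] using hA
  · exact (sideMin_le f hx).trans (hfA x)

theorem sideMin_le_outsideMax_or [Fintype X] [DecidableEq X] (f : X → ℝ) {S S' : Finset X}
    (h : S ≠ S') : sideMin f S ≤ outsideMax f S' ∨ sideMin f S' ≤ outsideMax f S := by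
  obtain ⟨x, hx⟩ := not_forall.1 (mt Finset.ext h)
  by_cases hxS : x ∈ S
  · exact .inl ((sideMin_le f hxS).trans (le_outsideMax f fun h' => hx (iff_of_true hxS h')))
  · exact .inr ((sideMin_le f (by tauto)).trans (le_outsideMax f hxS))

end tileSides

theorem sum_filter_prod_prod_eq {α β γ M : Type*} [Fintype α] [Fintype β] [Fintype γ]
    [DecidableEq γ] [AddCommMonoid M] (p : α → Prop) (r : β → Prop) (C : α → β → Prop)
    [DecidablePred p] [DecidablePred r] [∀ a, DecidablePred (C a)] (c : γ) (f : α → β → M) :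
    ∑ t ∈ univ.filter (fun t : α × β × γ => (p t.1 ∧ r t.2.1 ∧ t.2.2 = c) ∧ C t.1 t.2.1),
      f t.1 t.2.1 = ∑ a ∈ univ.filter p, ∑ b ∈ univ.filter (fun b => r b ∧ C a b), f a b := by
  simp [sum_filter, Fintype.sum_prod_type, ite_and]

section tileWeight

variable {X Y : Type*} [Fintype X] [DecidableEq X] [Fintype Y] [DecidableEq Y]
  {f : X → ℝ} {g : Y → ℝ} {A B θ : ℝ}

theorem sum_gap_le_min (hg : ∀ y, 0 ≤ g y) (hgB : ∀ y, g y ≤ B) (hB : 0 ≤ B) (hθ : 0 ≤ θ)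
    {a : ℝ} (ha : 0 < a) :
    ∑ T ∈ univ.filter (fun T => outsideMax g T < sideMin g T ∧ a * sideMin g T < θ),
      (sideMin g T - outsideMax g T) ≤ min B (θ / a) := by
  simpa using sum_le_sub_of_separated _ (outsideMax g) (sideMin g) _ (G := id) (a := 0)
    (le_min hB (div_nonneg hθ ha.le)) monotoneOn_id (fun T _ => outsideMax_nonneg hg T)
    (fun T hT => (mem_filter.1 hT).2.1)
    (fun T hT => le_min (sideMin_le_of_forall_le hB hgB T)
      ((lt_div_iff₀' ha).2 (mem_filter.1 hT).2.2).le)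
    (fun T _ T' _ h => sideMin_le_outsideMax_or g h) (fun T _ => le_rfl)

theorem sum_sum_gap_mul_gap_le (hf : ∀ x, 0 ≤ f x) (hg : ∀ y, 0 ≤ g y) (hfA : ∀ x, f x ≤ A)
    (hgB : ∀ y, g y ≤ B) (hA : 0 ≤ A) (hB : 0 ≤ B) (hθ : 0 ≤ θ) :
    ∑ S ∈ univ.filter (fun S => outsideMax f S < sideMin f S),
      ∑ T ∈ univ.filter (fun T => outsideMax g T < sideMin g T ∧ sideMin f S * sideMin g T < θ),
        (sideMin f S - outsideMax f S) * (sideMin g T - outsideMax g T)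
      ≤ θ * (1 + log⁺ (A * B / θ)) := by
  rcases hθ.eq_or_lt with rfl | hθ
  · refine (sum_eq_zero fun S _ => sum_eq_zero fun T hT => ?_).trans_le (by simp)
    exact absurd (mem_filter.1 hT).2.2
      (not_lt.2 (mul_nonneg (sideMin_nonneg hf S) (sideMin_nonneg hg T)))
  calc _ ≤ ∑ S ∈ univ.filter (fun S => outsideMax f S < sideMin f S),
        (sideMin f S - outsideMax f S) * min B (θ / sideMin f S) := by
        refine sum_le_sum fun S hS => ?_
        have hS := (mem_filter.1 hS).2
        rw [← mul_sum]
        exact mul_le_mul_of_nonneg_left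
          (sum_gap_le_min hg hgB hB hθ.le ((outsideMax_nonneg hf S).trans_lt hS))
          (sub_nonneg.2 hS.le)
    _ ≤ hyperbolaArea θ B A - hyperbolaArea θ B 0 :=
        sum_le_sub_of_separated _ (outsideMax f) (sideMin f) _ hA
          ((monotoneOn_hyperbolaArea hθ hB).mono Set.Icc_subset_Ici_self)
          (fun S _ => outsideMax_nonneg hf S) (fun S hS => (mem_filter.1 hS).2)
          (fun S _ => sideMin_le_of_forall_le hA hfA S)
          (fun S _ S' _ h => sideMin_le_outsideMax_or f h)
          (fun S hS => sub_mul_min_le_hyperbolaArea_sub hθ hB (outsideMax_nonneg hf S)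
            (mem_filter.1 hS).2.le)
    _ ≤ θ * (1 + log⁺ (A * B / θ)) := by
        rw [hyperbolaArea_zero hθ.le, sub_zero]
        exact hyperbolaArea_le hθ A

theorem sum_tile_weight_le {Z : Type*} [Fintype Z] [DecidableEq Z] {z₀ : Z}
    (hf : ∀ x, 0 ≤ f x) (hg : ∀ y, 0 ≤ g y) (hfA : ∀ x, f x ≤ A) (hgB : ∀ y, g y ≤ B)
    (hA : 0 ≤ A) (hB : 0 ≤ B) (hθ : 0 ≤ θ) :
    ∑ t ∈ univ.filter (fun t : Finset X × Finset Y × Z =>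
        (outsideMax f t.1 < sideMin f t.1 ∧ outsideMax g t.2.1 < sideMin g t.2.1 ∧ t.2.2 = z₀) ∧
          sideMin f t.1 * sideMin g t.2.1 < θ),
      (sideMin f t.1 - outsideMax f t.1) * (sideMin g t.2.1 - outsideMax g t.2.1)
      ≤ θ * (1 + log⁺ (A * B / θ)) :=
  (sum_filter_prod_prod_eq _ _ _ _ _).trans_le (sum_sum_gap_mul_gap_le hf hg hfA hgB hA hB hθ)

end tileWeight

section channel

variable {X Y Q : Type*} [Fintype X] [Fintype Y] [Fintype Q]

theorem sum_sum_sum_mul_eq (μ : X → Y → ℝ) {p : Q → X → Y → ℝ}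
    (hp1 : ∀ x y, ∑ q, p q x y = 1) :
    ∑ q, ∑ x, ∑ y, μ x y * p q x y = ∑ x, ∑ y, μ x y := by
  rw [sum_comm]
  refine sum_congr rfl fun x _ => ?_
  rw [sum_comm]
  simp [← mul_sum, hp1]

theorem mutualInfo_nonneg {μ : X → Y → ℝ} (hμ0 : ∀ x y, 0 ≤ μ x y)
    (hμ1 : ∑ x, ∑ y, μ x y = 1) {p : Q → X → Y → ℝ} (hp0 : ∀ q x y, 0 ≤ p q x y)
    (hp1 : ∀ x y, ∑ q, p q x y = 1) {pq : Q → ℝ}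
    (hpq : ∀ q, pq q = ∑ x, ∑ y, μ x y * p q x y) :
    0 ≤ ∑ q, ∑ x, ∑ y, if 0 < μ x y * p q x y then
      μ x y * p q x y * logb 2 (p q x y / pq q) else 0 := by
  have hpq0 q : 0 ≤ pq q := (hpq q).symm ▸
    sum_nonneg fun x _ => sum_nonneg fun y _ => mul_nonneg (hμ0 x y) (hp0 q x y)
  -- Gibbs: `π log (π / ν) ≥ π - ν` termwise for `π = μ p`, `ν = μ pq`, and `∑ π = ∑ ν = 1`
  have hterm q x y : μ x y * p q x y - μ x y * pq q ≤ log 2 *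
      if 0 < μ x y * p q x y then μ x y * p q x y * logb 2 (p q x y / pq q) else 0 := by
    split_ifs with h
    · have hμ : 0 < μ x y := pos_of_mul_pos_left h (hp0 q x y)
      have hle : μ x y * p q x y ≤ pq q := by
        rw [hpq q]
        exact (single_le_sum (fun y _ => mul_nonneg (hμ0 x y) (hp0 q x y)) (mem_univ y)).trans
          (single_le_sum (f := fun x => ∑ y, μ x y * p q x y)
            (fun x _ => sum_nonneg fun y _ => mul_nonneg (hμ0 x y) (hp0 q x y)) (mem_univ x))
      have hν : 0 < μ x y * pq q := mul_pos hμ (h.trans_le hle)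
      have hp : 0 < p q x y := pos_of_mul_pos_right h (hμ0 x y)
      have hlog : 1 - pq q / p q x y ≤ log (p q x y / pq q) := by
        simpa only [mul_div_mul_left _ _ hμ.ne'] using one_sub_div_le_log_div h hν
      rw [logb, ← mul_assoc, mul_comm (log 2), mul_assoc,
        mul_div_cancel₀ _ (log_pos one_lt_two).ne']
      calc _ = μ x y * p q x y * (1 - pq q / p q x y) := by field_simp
        _ ≤ _ := mul_le_mul_of_nonneg_left hlog h.le
    · have h0 : μ x y * p q x y = 0 :=
        le_antisymm (not_lt.1 h) (mul_nonneg (hμ0 x y) (hp0 q x y))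
      simpa [h0] using mul_nonneg (hμ0 x y) (hpq0 q)
  have hsum : ∑ q, pq q = 1 := by simp only [hpq, sum_sum_sum_mul_eq μ hp1, hμ1]
  have hdiff : ∑ q, ∑ x, ∑ y, (μ x y * p q x y - μ x y * pq q) = 0 := by
    simp only [sum_sub_distrib, sum_sum_sum_mul_eq μ hp1, hμ1, mul_comm _ (pq _),
      ← mul_sum, mul_one, hsum, sub_self]
  have hlog2 : 0 ≤ log 2 * ∑ q, ∑ x, ∑ y, if 0 < μ x y * p q x y then
      μ x y * p q x y * logb 2 (p q x y / pq q) else 0 := by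
    simp only [mul_sum]
    exact hdiff.symm.le.trans
      (sum_le_sum fun q _ => sum_le_sum fun x _ => sum_le_sum fun y _ => hterm q x y)
  exact nonneg_of_mul_nonneg_right hlog2 (log_pos one_lt_two)

end channel

theorem mul_posLog_div_le {θ M N : ℝ} (hθ : 0 ≤ θ) (hM : 0 ≤ M) (hN : 1 ≤ N) :
    θ * log⁺ (M / θ) ≤ M / N + θ * log N := by
  have hlogN := log_nonneg hN
  rcases hθ.eq_or_lt with rfl | hθ
  · simpa using div_nonneg hM (zero_le_one.trans hN)
  rcases hM.eq_or_lt with rfl | hM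
  · simpa using mul_nonneg hθ.le hlogN
  rw [posLog_apply, mul_max_of_nonneg _ _ hθ.le, mul_zero, max_le_iff]
  refine ⟨by positivity, ?_⟩
  have hsplit : log (M / θ) = log (M / (θ * N)) + log N := by
    rw [← log_mul (by positivity) (by positivity)]
    field_simp
  have hlog := log_le_sub_one_of_pos (show 0 < M / (θ * N) by positivity)
  have hMN : θ * (M / (θ * N)) = M / N := by field_simp
  nlinarith [mul_le_mul_of_nonneg_left hlog hθ.le]

theorem two_add_log_le_four_mul_logb {N : ℝ} (hN : 2 ≤ N) : 2 + log N ≤ 4 * logb 2 N := by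
  have h1 : 1 ≤ logb 2 N := by
    simpa [logb_self_eq_one one_lt_two] using logb_le_logb_of_le one_lt_two two_pos hN
  have h2 : log N ≤ logb 2 N := by
    have hlog2 : log 2 ≤ 1 := log_two_lt_d9.le.trans (by norm_num)
    rw [← div_mul_cancel₀ (log N) (log_pos one_lt_two).ne', ← logb]
    nlinarith [log_pos one_lt_two]
  linarith

theorem sum_mul_one_add_posLog_div_le {Q : Type*} [Fintype Q] {θ M : Q → ℝ} {N : ℝ}
    (hθ : ∀ q, 0 ≤ θ q) (hM : ∀ q, 0 ≤ M q) (hθ1 : 1 ≤ ∑ q, θ q) (hMN : ∑ q, M q ≤ N)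
    (hN : 2 ≤ N) :
    ∑ q, θ q * (1 + log⁺ (M q / θ q)) ≤ (∑ q, θ q) * (4 * logb 2 N) := by
  calc _ ≤ ∑ q, (θ q * (1 + log N) + M q / N) := by
        refine sum_le_sum fun q _ => ?_
        rw [mul_one_add, mul_one_add]
        linarith [mul_posLog_div_le (hθ q) (hM q) (by linarith : 1 ≤ N)]
    _ ≤ (∑ q, θ q) * (1 + log N) + 1 := by
        rw [sum_add_distrib, ← sum_mul, ← sum_div]
        linarith [(div_le_one (by linarith)).2 hMN]
    _ ≤ _ := by nlinarith [two_add_log_le_four_mul_logb hN]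

theorem two_rpow_add_logb_logb_add_two (Δ : ℝ) {N : ℝ} (hN : 1 < N) :
    (2 : ℝ) ^ (Δ + logb 2 (logb 2 N) + 2) = 2 ^ Δ * (4 * logb 2 N) := by
  rw [rpow_add two_pos, rpow_add two_pos,
    rpow_logb two_pos one_lt_two.ne' (logb_pos one_lt_two hN)]
  norm_num
  ring

theorem surviving_tile_weight_le_general {X Y Z Q : Type*}
    [Fintype X] [Fintype Y] [Fintype Z] [Fintype Q]
    [DecidableEq X] [DecidableEq Y] [DecidableEq Z]
    (hcard : 2 ≤ Fintype.card X * Fintype.card Y)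
    (μ : X → Y → ℝ) (hμ0 : ∀ x y, 0 ≤ μ x y) (hμ1 : ∑ x : X, ∑ y : Y, μ x y = 1)
    (α : Q → X → ℝ) (β : Q → Y → ℝ)
    (hα : ∀ q x, 0 ≤ α q x) (hβ : ∀ q y, 0 ≤ β q y)
    (hp1 : ∀ x y, ∑ q : Q, α q x * β q y = 1)
    (z : Q → Z)
    (σ τ ω : Q → Finset X × Finset Y × Z → ℝ)
    (hσ : ∀ q (t : Finset X × Finset Y × Z),
      σ q t = (⨅ x : t.1, α q x.1) - (⨆ x : (t.1ᶜ : Finset X), α q x.1))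
    (hτ : ∀ q (t : Finset X × Finset Y × Z),
      τ q t = (⨅ y : t.2.1, β q y.1) - (⨆ y : (t.2.1ᶜ : Finset Y), β q y.1))
    (hω : ∀ q t, ω q t = σ q t * τ q t)
    (pq : Q → ℝ) (hpq : ∀ q, pq q = ∑ x : X, ∑ y : Y, μ x y * (α q x * β q y))
    (I : ℝ)
    (hI : I = ∑ q : Q, ∑ x : X, ∑ y : Y,
        if 0 < μ x y * (α q x * β q y) then
          μ x y * (α q x * β q y) * Real.logb 2 ((α q x * β q y) / pq q)
        else 0)
    (δ : ℝ) (hδ0 : 0 < δ)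
    (Δ : ℝ) (hΔ : Δ = (I + 1) / δ)
    (θ : Q → ℝ) (hθ : ∀ q, θ q = pq q * (2 : ℝ) ^ Δ)
    (αhat βhat : Q → Finset X × Finset Y × Z → ℝ)
    (hαhat : ∀ q (t : Finset X × Finset Y × Z), αhat q t = ⨅ x : t.1, α q x.1)
    (hβhat : ∀ q (t : Finset X × Finset Y × Z), βhat q t = ⨅ y : t.2.1, β q y.1) :
    (∑ q : Q, ∑ t ∈ Finset.univ.filter (fun t : Finset X × Finset Y × Z =>
        (0 < σ q t ∧ 0 < τ q t ∧ t.2.2 = z q) ∧ αhat q t * βhat q t < θ q),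
      ω q t)
      ≤ (2 : ℝ) ^ (Δ + Real.logb 2
            (Real.logb 2 ((Fintype.card X : ℝ) * (Fintype.card Y : ℝ))) + 2) := by
  set N : ℝ := (Fintype.card X : ℝ) * (Fintype.card Y : ℝ)
  have hN : 2 ≤ N := by unfold N; exact_mod_cast hcard
  have hpq0 q : 0 ≤ pq q := (hpq q).symm ▸ sum_nonneg fun x _ => sum_nonneg fun y _ =>
    mul_nonneg (hμ0 x y) (mul_nonneg (hα q x) (hβ q y))
  have hpq1 : ∑ q, pq q = 1 := by
    simpa only [hpq, hμ1] using sum_sum_sum_mul_eq (p := fun q x y => α q x * β q y) μ hp1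
  have hE : 1 ≤ (2 : ℝ) ^ Δ := by
    have hI0 : 0 ≤ I := hI ▸ mutualInfo_nonneg (p := fun q x y => α q x * β q y) hμ0 hμ1
      (fun q x y => mul_nonneg (hα q x) (hβ q y)) hp1 hpq
    exact one_le_rpow one_le_two (hΔ ▸ div_nonneg (by linarith) hδ0.le)
  have hθ0 q : 0 ≤ θ q := hθ q ▸ mul_nonneg (hpq0 q) (by linarith)
  have hA q : 0 ≤ ∑ x, α q x := sum_nonneg fun x _ => hα q x
  have hB q : 0 ≤ ∑ y, β q y := sum_nonneg fun y _ => hβ q y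
  have htile q : ∑ t ∈ Finset.univ.filter (fun t : Finset X × Finset Y × Z =>
        (0 < σ q t ∧ 0 < τ q t ∧ t.2.2 = z q) ∧ αhat q t * βhat q t < θ q), ω q t
      ≤ θ q * (1 + log⁺ ((∑ x, α q x) * (∑ y, β q y) / θ q)) := by
    simp only [hω, hσ, hτ, hαhat, hβhat, sub_pos]
    exact sum_tile_weight_le (hα q) (hβ q)
      (fun x => single_le_sum (fun x _ => hα q x) (mem_univ x))
      (fun y => single_le_sum (fun y _ => hβ q y) (mem_univ y)) (hA q) (hB q) (hθ0 q)
  have hAB : ∑ q, (∑ x, α q x) * (∑ y, β q y) = N := by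
    simpa [sum_mul_sum, N] using
      sum_sum_sum_mul_eq (p := fun q x y => α q x * β q y) (fun _ _ => (1 : ℝ)) hp1
  have hθ1 : ∑ q, θ q = 2 ^ Δ := by simp only [hθ, ← sum_mul, hpq1, one_mul]
  calc _ ≤ ∑ q, θ q * (1 + log⁺ ((∑ x, α q x) * (∑ y, β q y) / θ q)) :=
        sum_le_sum fun q _ => htile q
    _ ≤ (∑ q, θ q) * (4 * logb 2 N) :=
        sum_mul_one_add_posLog_div_le hθ0 (fun q => mul_nonneg (hA q) (hB q)) (hθ1 ▸ hE)
          hAB.le hN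
    _ = _ := by rw [hθ1, two_rpow_add_logb_logb_add_two Δ (by linarith)]

/-- surviving tile weight: In the slicing construction, the total
weight `∑ ω_{q,t}` over pairs `(q,t)` with `t ∈ T_q` and `α̂(q,t)·β̂(q,t) < θ_q`
is at most `2^(Δ + log₂ log₂(|X|·|Y|) + 2)`. -/
theorem surviving_tile_weight_le {X Y Z Q : Type*}
    [Fintype X] [Fintype Y] [Fintype Z] [Fintype Q]
    [Nonempty X] [Nonempty Y] [Nonempty Z] [Nonempty Q]
    [DecidableEq X] [DecidableEq Y] [DecidableEq Z]
    (hcard : 2 ≤ Fintype.card X * Fintype.card Y)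
    (μ : X → Y → ℝ) (hμ0 : ∀ x y, 0 ≤ μ x y) (hμ1 : ∑ x : X, ∑ y : Y, μ x y = 1)
    (α : Q → X → ℝ) (β : Q → Y → ℝ)
    (hα : ∀ q x, 0 ≤ α q x) (hβ : ∀ q y, 0 ≤ β q y)
    (hp1 : ∀ x y, ∑ q : Q, α q x * β q y = 1)
    (z : Q → Z)
    (σ τ ω : Q → Finset X × Finset Y × Z → ℝ)
    (hσ : ∀ q (t : Finset X × Finset Y × Z),
      σ q t = (⨅ x : t.1, α q x.1) - (⨆ x : (t.1ᶜ : Finset X), α q x.1))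
    (hτ : ∀ q (t : Finset X × Finset Y × Z),
      τ q t = (⨅ y : t.2.1, β q y.1) - (⨆ y : (t.2.1ᶜ : Finset Y), β q y.1))
    (hω : ∀ q t, ω q t = σ q t * τ q t)
    (pq : Q → ℝ) (hpq : ∀ q, pq q = ∑ x : X, ∑ y : Y, μ x y * (α q x * β q y))
    (I : ℝ)
    (hI : I = ∑ q : Q, ∑ x : X, ∑ y : Y,
        if 0 < μ x y * (α q x * β q y) then
          μ x y * (α q x * β q y) * Real.logb 2 ((α q x * β q y) / pq q)
        else 0)
    (δ : ℝ) (hδ0 : 0 < δ) (hδ1 : δ ≤ 1)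
    (Δ : ℝ) (hΔ : Δ = (I + 1) / δ)
    (θ : Q → ℝ) (hθ : ∀ q, θ q = pq q * (2 : ℝ) ^ Δ)
    (αhat βhat : Q → Finset X × Finset Y × Z → ℝ)
    (hαhat : ∀ q (t : Finset X × Finset Y × Z), αhat q t = ⨅ x : t.1, α q x.1)
    (hβhat : ∀ q (t : Finset X × Finset Y × Z), βhat q t = ⨅ y : t.2.1, β q y.1) :
    (∑ q : Q, ∑ t ∈ Finset.univ.filter (fun t : Finset X × Finset Y × Z =>
        (0 < σ q t ∧ 0 < τ q t ∧ t.2.2 = z q) ∧ αhat q t * βhat q t < θ q),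
      ω q t)
      ≤ (2 : ℝ) ^ (Δ + Real.logb 2
            (Real.logb 2 ((Fintype.card X : ℝ) * (Fintype.card Y : ℝ))) + 2) :=
  surviving_tile_weight_le_general hcard μ hμ0 hμ1 α β hα hβ hp1 z σ τ ω hσ hτ hω pq hpq I hI δ hδ0
    Δ hΔ θ hθ αhat βhat hαhat hβhat
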